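/- Let G be a finite simple graph of order n ≥ 2. Then adim_2(G) = n if and only if every vertex of G has a twin, i.e., every vertex belongs to a non-singleton twin equivalence class. -/

import Mathlib

/-! Any two distinct vertices are distinguished by themselves. Twins are distinguished by nothing
else, so a 2-adjacency generator must contain every vertex that has a twin; conversely, if `x` has
no twin then `V \ {x}` is still a 2-adjacency generator, since a pair `{x, v}` is distinguished by
`v` and by some third vertex. -/

open Finset

namespace AdjDim

noncomputable section
open Classical

variable {V W : Type*}

/-- Truncated distance `d_{G,2}(x,y) = min(d_G(x,y), 2)`:
`0` if `x = y`, `1` if `x` and `y` are adjacent, and `2` otherwise. -/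
def d2 (G : SimpleGraph V) (x y : V) : ℕ :=
  if x = y then 0 else if G.Adj x y then 1 else 2

/-- `S` is a `k`-adjacency generator for `G`: every pair of distinct vertices is
distinguished (w.r.t. `d_{G,2}`) by at least `k` vertices of `S`. -/
def IsKAdjGen (G : SimpleGraph V) [Fintype V] (k : ℕ) (S : Finset V) : Prop :=
  ∀ x y : V, x ≠ y → k ≤ (S.filter (fun w => d2 G x w ≠ d2 G y w)).card

/-- The `k`-adjacency dimension of `G`: the minimum cardinality of a
`k`-adjacency generator. -/
def adim (G : SimpleGraph V) [Fintype V] (k : ℕ) : ℕ :=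
  sInf {n | ∃ S : Finset V, IsKAdjGen G k S ∧ S.card = n}

/-- `B` is a `k`-adjacency basis of `G`: a `k`-adjacency generator of minimum
cardinality. -/
def IsKAdjBasis (G : SimpleGraph V) [Fintype V] (k : ℕ) (B : Finset V) : Prop :=
  IsKAdjGen G k B ∧ B.card = adim G k

/-- `G` is `k`-adjacency dimensional: `k` is the largest integer for which a
`k`-adjacency generator exists. -/
def IsKAdjDimensional (G : SimpleGraph V) [Fintype V] (k : ℕ) : Prop :=
  (∃ S : Finset V, IsKAdjGen G k S) ∧
    ∀ k' : ℕ, k < k' → ¬ ∃ S : Finset V, IsKAdjGen G k' S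

/-- `C_G(x,y)`: the set of vertices distinguishing `x` and `y` w.r.t. `d_{G,2}`. -/
def CSet (G : SimpleGraph V) [Fintype V] (x y : V) : Finset V :=
  univ.filter (fun z => d2 G x z ≠ d2 G y z)

/-- `C(G) = min_{x ≠ y} |C_G(x,y)|`. -/
def Cmin (G : SimpleGraph V) [Fintype V] : ℕ :=
  sInf {m | ∃ x y : V, x ≠ y ∧ (CSet G x y).card = m}

/-- `C_k(G)`: the union of the sets `C_G(x,y)` over pairs of distinct vertices
with `|C_G(x,y)| = k`. -/
def Ck (G : SimpleGraph V) [Fintype V] (k : ℕ) : Finset V :=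
  univ.filter (fun z => ∃ x y : V, x ≠ y ∧ (CSet G x y).card = k ∧ z ∈ CSet G x y)

/-- Two distinct vertices `x, y` are twins: every other vertex is at the same
truncated distance from both. -/
def Twins (G : SimpleGraph V) (x y : V) : Prop :=
  x ≠ y ∧ ∀ z : V, z ≠ x → z ≠ y → d2 G x z = d2 G y z

/-- The join `G + H` of two vertex-disjoint graphs. -/
def join (G : SimpleGraph V) (H : SimpleGraph W) : SimpleGraph (V ⊕ W) where
  Adj x y :=
    match x, y with
    | Sum.inl a, Sum.inl b => G.Adj a b
    | Sum.inr a, Sum.inr b => H.Adj a b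
    | Sum.inl _, Sum.inr _ => True
    | Sum.inr _, Sum.inl _ => True
  symm := by
    constructor
    rintro (a | a) (b | b) h
    · exact SimpleGraph.Adj.symm h
    · trivial
    · trivial
    · exact SimpleGraph.Adj.symm h
  loopless := by
    constructor
    rintro (a | a) h
    · exact G.irrefl h
    · exact H.irrefl h

/-- `K_1 + H`: the join of a one-vertex graph with `H`, i.e. `H` together with a
new universal vertex. -/
def K1join (H : SimpleGraph W) : SimpleGraph (Unit ⊕ W) :=
  join (⊥ : SimpleGraph Unit) H

section

variable {G : SimpleGraph V} {k : ℕ} {S : Finset V} {x y v : V}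

lemma d2_ne_zero (G : SimpleGraph V) (hxy : x ≠ y) : d2 G x y ≠ 0 := by
  unfold d2
  split_ifs <;> simp_all

lemma d2_left_ne (G : SimpleGraph V) (hxy : x ≠ y) : d2 G x x ≠ d2 G y x := by
  rw [d2, if_pos rfl]
  exact (d2_ne_zero G hxy.symm).symm

lemma d2_right_ne (G : SimpleGraph V) (hxy : x ≠ y) : d2 G x y ≠ d2 G y y :=
  fun h => d2_left_ne G hxy.symm h.symm

lemma card_filter_d2_ne_ge_two (hx : x ∈ S) (hy : y ∈ S) (hxy : x ≠ y) :
    2 ≤ (S.filter fun w => d2 G x w ≠ d2 G y w).card :=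
  one_lt_card_iff.2 ⟨x, y, mem_filter.2 ⟨hx, d2_left_ne G hxy⟩,
    mem_filter.2 ⟨hy, d2_right_ne G hxy⟩, hxy⟩

lemma filter_d2_ne_subset_of_twins (h : Twins G x y) :
    (S.filter fun w => d2 G x w ≠ d2 G y w) ⊆ {x, y} := by
  intro w hw
  by_contra hwxy
  simp only [mem_insert, mem_singleton, not_or] at hwxy
  exact (mem_filter.1 hw).2 (h.2 w hwxy.1 hwxy.2)

lemma IsKAdjGen.mem_of_twins [Fintype V] (hS : IsKAdjGen G 2 S) (h : Twins G x y) :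
    x ∈ S := by
  have hpair : (S.filter fun w => d2 G x w ≠ d2 G y w) = {x, y} :=
    eq_of_subset_of_card_le (filter_d2_ne_subset_of_twins h)
      ((card_pair h.1).trans_le (hS x y h.1))
  exact (mem_filter.1 (hpair ▸ mem_insert_self x {y})).1

lemma isKAdjGen_two_univ [Fintype V] (G : SimpleGraph V) : IsKAdjGen G 2 univ :=
  fun _ _ hxy => card_filter_d2_ne_ge_two (mem_univ _) (mem_univ _) hxy

lemma card_filter_d2_ne_ge_two_of_not_twins [Fintype V] (hxv : x ≠ v) (h : ¬ Twins G x v) :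
    2 ≤ ((univ.erase x).filter fun w => d2 G x w ≠ d2 G v w).card := by
  obtain ⟨z, hzx, hzv, hz⟩ : ∃ z, z ≠ x ∧ z ≠ v ∧ d2 G x z ≠ d2 G v z := by
    simpa [Twins, hxv] using h
  exact one_lt_card_iff.2 ⟨z, v, mem_filter.2 ⟨mem_erase.2 ⟨hzx, mem_univ z⟩, hz⟩,
    mem_filter.2 ⟨mem_erase.2 ⟨hxv.symm, mem_univ v⟩, d2_right_ne G hxv⟩, hzv⟩

lemma isKAdjGen_two_univ_erase [Fintype V] (hx : ∀ y, ¬ Twins G x y) :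
    IsKAdjGen G 2 (univ.erase x) := by
  intro u v huv
  by_cases hu : u = x
  · subst hu
    exact card_filter_d2_ne_ge_two_of_not_twins huv (hx v)
  by_cases hv : v = x
  · subst hv
    simpa only [ne_comm] using card_filter_d2_ne_ge_two_of_not_twins huv.symm (hx u)
  exact card_filter_d2_ne_ge_two (mem_erase.2 ⟨hu, mem_univ u⟩) (mem_erase.2 ⟨hv, mem_univ v⟩)
    huv

lemma adim_le_card [Fintype V] (hS : IsKAdjGen G k S) : adim G k ≤ S.card :=
  Nat.sInf_le ⟨S, hS, rfl⟩

lemma IsKAdjGen.exists_isKAdjBasis [Fintype V] (hS : IsKAdjGen G k S) :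
    ∃ B, IsKAdjBasis G k B := by
  obtain ⟨B, hB, hcard⟩ := Nat.sInf_mem (⟨S.card, S, hS, rfl⟩ :
    {n | ∃ S : Finset V, IsKAdjGen G k S ∧ S.card = n}.Nonempty)
  exact ⟨B, hB, hcard⟩

end

theorem adim_two_eq_card_iff_general [Fintype V] (G : SimpleGraph V) :
    adim G 2 = Fintype.card V ↔ ∀ x : V, ∃ y : V, Twins G x y := by
  constructor
  · intro hadim
    by_contra! hno_twin
    obtain ⟨x, hx⟩ := hno_twin
    have hle := adim_le_card (isKAdjGen_two_univ_erase hx)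
    rw [card_erase_of_mem (mem_univ x), card_univ] at hle
    have hpos : 0 < Fintype.card V := Fintype.card_pos_iff.2 ⟨x⟩
    omega
  · intro htwin
    obtain ⟨B, hB, hcard⟩ := (isKAdjGen_two_univ G).exists_isKAdjBasis
    have hB_univ : B = univ := eq_univ_of_forall fun x =>
      (htwin x).elim fun _ hxy => hB.mem_of_twins hxy
    rw [← hcard, hB_univ, card_univ]

/-- Corollary 3.5: for a graph of order `n ≥ 2`, `adim_2(G) = n` if and only
if every vertex has a twin. -/
theorem adim_two_eq_card_iff [Fintype V] (G : SimpleGraph V)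
    (h : 2 ≤ Fintype.card V) :
    adim G 2 = Fintype.card V ↔ ∀ x : V, ∃ y : V, Twins G x y :=
  adim_two_eq_card_iff_general G

end
end AdjDim
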